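/- Let M be a finitely generated ℤ-graded R-module with minimal free resolution F. Then ν_i^1(M) = 0 if and only if every homogeneous g ∈ F_i with d g ∈ m² F_{i−1} satisfies g ∈ m F_i. -/

import Mathlib

set_option maxHeartbeats 1000000
set_option synthInstance.maxHeartbeats 400000

open MvPolynomial

noncomputable section

namespace LinMaps


/-- The polynomial ring `S = 𝕜[x₁,…,xₙ]`. -/
abbrev PolyS (k : Type) [Field k] (n : ℕ) := MvPolynomial (Fin n) k

/-- The irrelevant maximal ideal `m = (x₁,…,xₙ)` of `S`. -/
def mIdl (k : Type) [Field k] (n : ℕ) : Ideal (PolyS k n) := Ideal.span (Set.range X)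

/-- `polyHom t p` : the polynomial `p` is homogeneous of degree `t ∈ ℤ` in the standard
`ℤ`-grading of `S`. -/
def polyHom (k : Type) [Field k] (n : ℕ) : ℤ → PolyS k n → Prop := fun t p =>
  if 0 ≤ t then p.IsHomogeneous t.toNat else p = 0

/-- `J` is a homogeneous ideal. -/
def IdealIsHomog {k : Type} [Field k] {n : ℕ} (J : Ideal (PolyS k n)) : Prop :=
  ∀ p ∈ J, ∀ t : ℕ, MvPolynomial.homogeneousComponent t p ∈ J

/-- Homogeneity of degree `t ∈ ℤ` in `R = S/J`. -/
def quotHom (k : Type) [Field k] (n : ℕ) (J : Ideal (PolyS k n)) :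
    ℤ → (PolyS k n ⧸ J) → Prop :=
  fun t r => ∃ p : PolyS k n, polyHom k n t p ∧ Ideal.Quotient.mk J p = r

/-- The irrelevant maximal ideal of `R = S/J`. -/
def mIdlQ (k : Type) [Field k] (n : ℕ) (J : Ideal (PolyS k n)) : Ideal (PolyS k n ⧸ J) :=
  (mIdl k n).map (Ideal.Quotient.mk J)

/-- Homogeneity for the fine `ℤⁿ`-multigrading on `S`: `p` is homogeneous of
multidegree `m : Fin n → ℤ`. -/
def mHom (k : Type) [Field k] (n : ℕ) : (Fin n → ℤ) → PolyS k n → Prop := fun m p =>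
  ∀ d ∈ p.support, ∀ u, (d u : ℤ) = m u

/-- A structure of graded module (with degrees in the abelian group `γ`) on an `A`-module `M`,
relative to a notion `hom : γ → A → Prop` of homogeneous elements of the ring `A`:
a family of additive subgroups forming an internal direct sum, such that homogeneous ring
elements shift degrees. -/
structure GrModStr {A : Type} [CommRing A] {γ : Type} [AddCommGroup γ] [DecidableEq γ]
    (hom : γ → A → Prop) (M : Type) [AddCommGroup M] [Module A M] where
  gr : γ → AddSubgroup M
  internal : DirectSum.IsInternal gr
  smul_mem : ∀ {t e : γ} {r : A} {m : M}, hom t r → m ∈ gr e → r • m ∈ gr (t + e)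

/-- A minimal graded free resolution `F : 0 ← M ← F₀ ← F₁ ← ⋯` of the graded `A`-module `M`.
`β i` is a (finite) homogeneous basis of `Fᵢ = β i →₀ A`, with degrees `degB`.
The differential `d` and augmentation `aug` are homogeneous, the complex is exact,
and minimality `d(Fᵢ) ⊆ m·Fᵢ₋₁` holds (all matrix entries lie in `mA`). -/
structure MinFreeRes {A : Type} [CommRing A] (mA : Ideal A) {γ : Type} [AddCommGroup γ]
    [DecidableEq γ] (hom : γ → A → Prop) (M : Type) [AddCommGroup M] [Module A M]
    (gM : GrModStr hom M) where
  β : ℕ → Type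
  finb : ∀ i, Fintype (β i)
  degB : ∀ i, β i → γ
  d : ∀ i, (β (i+1) →₀ A) →ₗ[A] (β i →₀ A)
  aug : (β 0 →₀ A) →ₗ[A] M
  aug_surj : Function.Surjective aug
  exact0 : LinearMap.ker aug = LinearMap.range (d 0)
  exact : ∀ i, LinearMap.ker (d i) = LinearMap.range (d (i+1))
  homog : ∀ i (b : β (i+1)) (c : β i), hom (degB (i+1) b - degB i c) (d i (Finsupp.single b 1) c)
  minimal : ∀ i (b : β (i+1)) (c : β i), d i (Finsupp.single b 1) c ∈ mA
  aug_hom : ∀ (t : γ) (g : β 0 →₀ A), (∀ c, hom (t - degB 0 c) (g c)) → aug g ∈ gM.gr t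

namespace MinFreeRes

variable {A : Type} [CommRing A] {mA : Ideal A} {γ : Type} [AddCommGroup γ] [DecidableEq γ]
  {hom : γ → A → Prop} {M : Type} [AddCommGroup M] [Module A M] {gM : GrModStr hom M}
  (res : MinFreeRes mA hom M gM)

/-- The matrix entry of the differential between basis elements `b` and `c`. -/
def ent (i : ℕ) (b : res.β (i+1)) (c : res.β i) : A := res.d i (Finsupp.single b 1) c

/-- `g ∈ Fᵢ` is homogeneous of (internal) degree `t`. -/
def IsHomogF (i : ℕ) (t : γ) (g : res.β i →₀ A) : Prop := ∀ c, hom (t - res.degB i c) (g c)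

open Classical in
/-- The entries of the linear part of the differential: all entries lying in `m²` are deleted. -/
def linent (i : ℕ) (b : res.β (i+1)) (c : res.β i) : A :=
  if res.ent i b c ∈ mA ^ 2 then 0 else res.ent i b c

/-- The row of the linear part of the differential corresponding to a basis element `b`. -/
def linrow (i : ℕ) (b : res.β (i+1)) : res.β i →₀ A :=
  letI := res.finb i
  Finsupp.equivFunOnFinite.symm fun c => res.linent i b c

/-- The differential of the linear part `F^lin` of the resolution. -/
def dlin (i : ℕ) : (res.β (i+1) →₀ A) →ₗ[A] (res.β i →₀ A) :=
  Finsupp.linearCombination A (fun b => res.linrow i b)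

/-- The submodule `mᵉ · Fᵢ`. -/
def mF (ℓ i : ℕ) : Submodule A (res.β i →₀ A) := (mA ^ ℓ) • (⊤ : Submodule A (res.β i →₀ A))

/-- Nonvanishing of the `i`-th homology of the linear part `F^lin`. -/
def HlinNZ : ℕ → Prop
  | 0 => LinearMap.range (res.dlin 0) ≠ ⊤
  | i+1 => ¬ LinearMap.ker (res.dlin i) ≤ LinearMap.range (res.dlin (i+1))

/-- The complex `F ⊗ A/mᵉ`, concretely `Fᵢ/mᵉFᵢ`. -/
abbrev Cq (ℓ i : ℕ) := (res.β i →₀ A) ⧸ res.mF ℓ i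

/-- The differential of `F ⊗ A/mᵉ`. -/
def dq (ℓ i : ℕ) : res.Cq ℓ (i+1) →ₗ[A] res.Cq ℓ i :=
  Submodule.mapQ _ _ (res.d i) (by
    rw [← Submodule.map_le_iff_le_comap]
    calc Submodule.map (res.d i) (res.mF ℓ (i+1))
        = (mA ^ ℓ) • Submodule.map (res.d i) ⊤ := Submodule.map_smul'' _ _ _
      _ ≤ res.mF ℓ i := smul_mono_right _ le_top)

/-- The comparison map `F ⊗ A/m² → F ⊗ A/m` induced by the projection `A/m² → A/m`. -/
def qq (i : ℕ) : res.Cq 2 i →ₗ[A] res.Cq 1 i :=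
  Submodule.mapQ _ _ LinearMap.id (by
    rw [← Submodule.map_le_iff_le_comap, Submodule.map_id]
    exact Submodule.smul_mono_left (Ideal.pow_le_pow_right one_le_two))

lemma qq_dq (i : ℕ) : (res.qq i).comp (res.dq 2 i) = (res.dq 1 i).comp (res.qq (i+1)) := by
  apply Submodule.linearMap_qext
  apply LinearMap.ext
  intro x
  simp [dq, qq, Submodule.mapQ_apply]

/-- Tor₀ of `M` with `A/mᵉ`, computed from the resolution. -/
abbrev Tor0 (ℓ : ℕ) := (res.Cq ℓ 0) ⧸ LinearMap.range (res.dq ℓ 0)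

/-- Cycles of `F ⊗ A/mᵉ` in homological degree `l+1`. -/
abbrev Zc (ℓ l : ℕ) : Submodule A (res.Cq ℓ (l+1)) := LinearMap.ker (res.dq ℓ l)

/-- Boundaries, as a submodule of the cycles. -/
abbrev Bc (ℓ l : ℕ) : Submodule A ↥(res.Zc ℓ l) :=
  Submodule.comap (res.Zc ℓ l).subtype (LinearMap.range (res.dq ℓ (l+1)))

/-- `Tor_{l+1}(M, A/mᵉ)` computed from the resolution. -/
abbrev TorS (ℓ l : ℕ) := ↥(res.Zc ℓ l) ⧸ res.Bc ℓ l

/-- `qq` restricted to cycles. -/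
def qqZ (l : ℕ) : ↥(res.Zc 2 l) →ₗ[A] ↥(res.Zc 1 l) :=
  (res.qq (l+1)).restrict (p := res.Zc 2 l) (q := res.Zc 1 l) (by
    intro x hx
    have h := LinearMap.ext_iff.mp (res.qq_dq l) x
    simp only [LinearMap.comp_apply] at h
    simp only [Zc, LinearMap.mem_ker] at hx ⊢
    rw [← h, hx, map_zero])

/-- The map `ν^1_{l+1}(M) : Tor_{l+1}(M, A/m²) → Tor_{l+1}(M, A/m)`. -/
def nuS (l : ℕ) : res.TorS 2 l →ₗ[A] res.TorS 1 l :=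
  Submodule.mapQ _ _ (res.qqZ l) (by
    rintro ⟨x, hx⟩ hb
    simp only [Bc, Submodule.mem_comap, Submodule.subtype_apply, LinearMap.mem_range] at hb ⊢
    obtain ⟨y, hy⟩ := hb
    refine ⟨res.qq (l+2) y, ?_⟩
    have h := LinearMap.ext_iff.mp (res.qq_dq (l+1)) y
    simp only [LinearMap.comp_apply] at h
    show res.dq 1 (l+1) (res.qq (l+2) y) = (res.qqZ l ⟨x, hx⟩ : res.Cq 1 (l+1))
    rw [← h, hy]
    rfl)

/-- The map `ν^1_0(M) : Tor₀(M, A/m²) → Tor₀(M, A/m)`. -/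
def nu0 : res.Tor0 2 →ₗ[A] res.Tor0 1 :=
  Submodule.mapQ _ _ (res.qq 0) (by
    rintro x hx
    simp only [LinearMap.mem_range, Submodule.mem_comap] at hx ⊢
    obtain ⟨y, hy⟩ := hx
    refine ⟨res.qq 1 y, ?_⟩
    have h := LinearMap.ext_iff.mp (res.qq_dq 0) y
    simp only [LinearMap.comp_apply] at h
    rw [← h, hy])

/-- Nonvanishing of `ν_i^1(M)`. -/
def nuNZ : ℕ → Prop
  | 0 => res.nu0 ≠ 0
  | l+1 => res.nuS l ≠ 0

end MinFreeRes

section ZGraded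

variable {A : Type} [CommRing A] {mA : Ideal A}
  {hom : ℤ → A → Prop} {M : Type} [AddCommGroup M] [Module A M] {gM : GrModStr hom M}
  (res : MinFreeRes mA hom M gM)

namespace MinFreeRes

/-- The strand filtration `F^{≤k}`: the subcomplex of `F` generated by all homogeneous
elements `a` with `‖a‖ = deg a - i ≤ k`. -/
def Fle (kk : ℤ) (i : ℕ) : Submodule A (res.β i →₀ A) :=
  Submodule.span A {g | ∃ t : ℤ, res.IsHomogF i t g ∧ t - i ≤ kk}

/-- `|a|_F = min {k : a ∈ F^{≤k}}`. -/
def degF {i : ℕ} (a : res.β i →₀ A) : ℤ := sInf {kk : ℤ | a ∈ res.Fle kk i}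

/-- `|a|_m = max {ℓ : a ∈ mᵉF}`. -/
def degm {i : ℕ} (a : res.β i →₀ A) : ℕ := sSup {ℓ : ℕ | a ∈ res.mF ℓ i}

/-- The `k`-linear strand of `F^lin`: the subcomplex spanned by the basis elements `b`
with `‖b‖ = deg b - i = k`. -/
def strand (kk : ℤ) (i : ℕ) : Submodule A (res.β i →₀ A) :=
  Submodule.span A {g | ∃ b : res.β i, res.degB i b - i = kk ∧ g = Finsupp.single b 1}

/-- Vanishing of the homology of the subcomplex `F^{≤k}` in homological degree `j`. -/
def HleZero (kk : ℤ) : ℕ → Prop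
  | 0 => res.Fle kk 0 ≤ Submodule.map (res.d 0) (res.Fle kk 1)
  | j+1 => LinearMap.ker (res.d j) ⊓ res.Fle kk (j+1) ≤
      Submodule.map (res.d (j+1)) (res.Fle kk (j+2))

end MinFreeRes

/-- The submodule `M_{⟨k⟩}` of `M` generated by the homogeneous elements of degree `k`. -/
def degPartMod (gM : GrModStr hom M) (k₀ : ℤ) : Submodule A M :=
  Submodule.span A (gM.gr k₀ : Set M)

/-- A graded module `(N, gN)` has a `k₀`-linear (minimal free) resolution. -/
def HasLinRes (N : Type) [AddCommGroup N] [Module A N] (gN : GrModStr hom N) (k₀ : ℤ) : Prop :=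
  ∃ res : MinFreeRes mA hom N gN, ∀ i (b : res.β i), res.degB i b = k₀ + i

/-- `M` is componentwise linear: for every `k₀`, the submodule `M_{⟨k₀⟩}` (with its induced
grading) has a `k₀`-linear resolution. -/
def CompLinear (mA : Ideal A) (gM : GrModStr hom M) : Prop :=
  ∀ k₀ : ℤ, ∃ gN : GrModStr hom ↥(degPartMod gM k₀),
    (∀ (t : ℤ) (x : ↥(degPartMod gM k₀)), x ∈ gN.gr t ↔ (x : M) ∈ gM.gr t) ∧
    HasLinRes (mA := mA) ↥(degPartMod gM k₀) gN k₀

end ZGraded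

/-! Minimality `d(F) ⊆ mF` kills the differential of `F ⊗ R/m`, so `ν_i^1` vanishes exactly when
every `g ∈ F_i` with `d g ∈ m² F_{i-1}` lies in `m F_i`. To reduce to homogeneous `g`, split `g`
into homogeneous components `g_s`: the `d g_s` are homogeneous of pairwise distinct degrees, and
since `m²` and `J` are homogeneous ideals, `d g ∈ m² F` forces `d g_s ∈ m² F` for every `s`. -/

theorem Finsupp.mem_ideal_smul_top_iff {A ι : Type} [CommRing A] (I : Ideal A) (g : ι →₀ A) :
    g ∈ I • (⊤ : Submodule A (ι →₀ A)) ↔ ∀ c, g c ∈ I := by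
  refine ⟨fun hg => ?_, fun hg => ?_⟩
  · refine Submodule.smul_induction_on hg (fun r hr x _ c => ?_) (fun x y hx hy c => ?_)
    · exact Ideal.mul_mem_right _ _ hr
    · exact add_mem (hx c) (hy c)
  · rw [← Finsupp.sum_single g]
    refine Submodule.finsuppSum_mem _ _ _ _ fun c _ => ?_
    rw [← mul_one (g c), ← smul_eq_mul, ← Finsupp.smul_single]
    exact Submodule.smul_mem_smul (hg c) Submodule.mem_top

namespace MinFreeRes

section Tor

variable {A : Type} [CommRing A] {mA : Ideal A} {γ : Type} [AddCommGroup γ] [DecidableEq γ]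
  {hom : γ → A → Prop} {M : Type} [AddCommGroup M] [Module A M] {gM : GrModStr hom M}
  (res : MinFreeRes mA hom M gM)

theorem mem_mF_iff {ℓ i : ℕ} {g : res.β i →₀ A} : g ∈ res.mF ℓ i ↔ ∀ c, g c ∈ mA ^ ℓ :=
  Finsupp.mem_ideal_smul_top_iff _ g

theorem d_apply (i : ℕ) (g : res.β (i+1) →₀ A) (c : res.β i) :
    res.d i g c = ∑ b ∈ g.support, g b * res.ent i b c := by
  conv_lhs => rw [← Finsupp.sum_single g]
  rw [map_finsuppSum, Finsupp.sum, Finset.sum_apply']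
  refine Finset.sum_congr rfl fun b _ => ?_
  rw [← Finsupp.smul_single_one, map_smul, Finsupp.smul_apply, smul_eq_mul, ent]

theorem d_mem_mF_one (i : ℕ) (g : res.β (i+1) →₀ A) : res.d i g ∈ res.mF 1 i :=
  res.mem_mF_iff.2 fun c => by
    rw [d_apply, pow_one]
    exact sum_mem fun b _ => Ideal.mul_mem_left _ _ (res.minimal i b c)

theorem dq_one_eq_zero (i : ℕ) : res.dq 1 i = 0 := by
  refine LinearMap.ext fun x => ?_
  induction x using Submodule.Quotient.induction_on with
  | H g => exact (Submodule.Quotient.mk_eq_zero _).2 (res.d_mem_mF_one i g)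

theorem nu0_eq_zero_iff : res.nu0 = 0 ↔ ∀ g : res.β 0 →₀ A, g ∈ res.mF 1 0 := by
  have hnu (g : res.β 0 →₀ A) : res.nu0 (Submodule.Quotient.mk (Submodule.Quotient.mk g)) = 0 ↔
      g ∈ res.mF 1 0 := by
    simp [nu0, qq, dq_one_eq_zero]
  refine ⟨fun h g => (hnu g).1 (by rw [h]; rfl), fun h => ?_⟩
  refine LinearMap.ext fun x => ?_
  induction x using Submodule.Quotient.induction_on with
  | H y =>
    induction y using Submodule.Quotient.induction_on with
    | H g => exact (hnu g).2 (h g)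

theorem nuS_eq_zero_iff (l : ℕ) : res.nuS l = 0 ↔
    ∀ g : res.β (l+1) →₀ A, res.d l g ∈ res.mF 2 l → g ∈ res.mF 1 (l+1) := by
  have hnu (g : res.β (l+1) →₀ A) (hg : res.d l g ∈ res.mF 2 l) :
      res.nuS l (Submodule.Quotient.mk ⟨Submodule.Quotient.mk g,
        (Submodule.Quotient.mk_eq_zero _).2 hg⟩) = 0 ↔ g ∈ res.mF 1 (l+1) := by
    simp [nuS, qqZ, qq, dq_one_eq_zero]
  refine ⟨fun h g hg => (hnu g hg).1 (by rw [h]; rfl), fun h => ?_⟩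
  refine LinearMap.ext fun x => ?_
  induction x using Submodule.Quotient.induction_on with
  | H z =>
    obtain ⟨z, hz⟩ := z
    induction z using Submodule.Quotient.induction_on with
    | H g =>
      have hg : res.d l g ∈ res.mF 2 l := (Submodule.Quotient.mk_eq_zero _).1 hz
      exact (hnu g hg).2 (h g hg)

end Tor

end MinFreeRes

section Graded

variable {k : Type} [Field k] {n : ℕ}

theorem polyHom_zero (t : ℤ) : polyHom k n t 0 := by
  unfold polyHom
  split_ifs
  exacts [isHomogeneous_zero _ _ _, rfl]

theorem polyHom_add {t : ℤ} {p q : PolyS k n} (hp : polyHom k n t p) (hq : polyHom k n t q) :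
    polyHom k n t (p + q) := by
  unfold polyHom at *
  split_ifs at * with ht
  · exact hp.add hq
  · rw [hp, hq, add_zero]

theorem polyHom_mul {t t' : ℤ} {p q : PolyS k n} (hp : polyHom k n t p)
    (hq : polyHom k n t' q) : polyHom k n (t + t') (p * q) := by
  unfold polyHom at *
  by_cases ht : 0 ≤ t
  · by_cases ht' : 0 ≤ t'
    · rw [if_pos ht] at hp
      rw [if_pos ht'] at hq
      rw [if_pos (add_nonneg ht ht'), show (t + t').toNat = t.toNat + t'.toNat by omega]
      exact hp.mul hq
    · rw [if_neg ht'] at hq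
      rw [hq, mul_zero]
      exact polyHom_zero _
  · rw [if_neg ht] at hp
    rw [hp, zero_mul]
    exact polyHom_zero _

theorem homogeneousComponent_of_polyHom {t : ℤ} {p : PolyS k n} (hp : polyHom k n t p)
    (j : ℕ) : homogeneousComponent j p = if (j : ℤ) = t then p else 0 := by
  unfold polyHom at hp
  split_ifs at hp with ht
  · rw [homogeneousComponent_of_mem hp]
    congr 1
    exact propext ⟨fun h => by omega, fun h => by omega⟩
  · rw [hp, map_zero, ite_self]

/-- The homogeneous component of degree `t ∈ ℤ`; it vanishes for `t < 0`. -/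
def homogeneousComponentInt (t : ℤ) (p : PolyS k n) : PolyS k n :=
  if 0 ≤ t then homogeneousComponent t.toNat p else 0

theorem polyHom_homogeneousComponentInt (t : ℤ) (p : PolyS k n) :
    polyHom k n t (homogeneousComponentInt t p) := by
  unfold polyHom homogeneousComponentInt
  split_ifs
  exacts [homogeneousComponent_isHomogeneous _ p, rfl]

theorem sum_homogeneousComponentInt_sub {T : Finset ℤ} {e : ℤ} {p : PolyS k n}
    (hT : ∀ j ≤ p.totalDegree, (j : ℤ) + e ∈ T) :
    ∑ s ∈ T, homogeneousComponentInt (s - e) p = p := by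
  classical
  have hsub : (Finset.range (p.totalDegree + 1)).image (fun j : ℕ => (j : ℤ) + e) ⊆ T := by
    intro s hs
    obtain ⟨j, hj, rfl⟩ := Finset.mem_image.1 hs
    exact hT j (Nat.lt_succ_iff.1 (Finset.mem_range.1 hj))
  rw [← Finset.sum_subset hsub, Finset.sum_image fun a _ b _ h => by omega]
  · conv_rhs => rw [← sum_homogeneousComponent p]
    refine Finset.sum_congr rfl fun j _ => ?_
    simp [homogeneousComponentInt]
  · intro s _ hs
    unfold homogeneousComponentInt
    split_ifs with hpos
    · refine homogeneousComponent_eq_zero _ _ (not_le.1 fun hle => hs ?_)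
      exact Finset.mem_image.2 ⟨(s - e).toNat, Finset.mem_range.2 (Nat.lt_succ_of_le hle),
        by omega⟩
    · rfl

theorem IdealIsHomog.sup {I I' : Ideal (PolyS k n)} (hI : IdealIsHomog I)
    (hI' : IdealIsHomog I') : IdealIsHomog (I ⊔ I') := by
  intro p hp t
  obtain ⟨a, ha, b, hb, rfl⟩ := Submodule.mem_sup.1 hp
  rw [map_add]
  exact Submodule.add_mem_sup (hI a ha t) (hI' b hb t)

theorem idealIsHomog_mIdl_pow (ℓ : ℕ) : IdealIsHomog (mIdl k n ^ ℓ) := by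
  intro p hp t
  rw [mIdl, mem_pow_idealOfVars_iff] at hp ⊢
  intro x hx
  rw [support_homogeneousComponent, Finset.mem_filter] at hx
  exact hp x hx.1

theorem IdealIsHomog.mem_of_sum_mem {I : Ideal (PolyS k n)} (hI : IdealIsHomog I) {ι : Type}
    {T : Finset ι} {deg : ι → ℤ} (hdeg : Set.InjOn deg T) {p : ι → PolyS k n}
    (hp : ∀ s ∈ T, polyHom k n (deg s) (p s)) (hsum : ∑ s ∈ T, p s ∈ I) :
    ∀ s ∈ T, p s ∈ I := by
  intro s hs
  by_cases hpos : 0 ≤ deg s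
  · have hcomp : homogeneousComponent (deg s).toNat (∑ s ∈ T, p s) = p s := by
      rw [map_sum, Finset.sum_eq_single_of_mem s hs]
      · rw [homogeneousComponent_of_polyHom (hp s hs), if_pos (by omega)]
      · intro s' hs' hne
        rw [homogeneousComponent_of_polyHom (hp s' hs'), if_neg]
        exact fun h => hne (hdeg hs' hs (by omega))
    exact hcomp ▸ hI _ hsum _
  · have hp0 : p s = 0 := by simpa [polyHom, hpos] using hp s hs
    exact hp0 ▸ I.zero_mem

end Graded

section Quotient

variable {k : Type} [Field k] {n : ℕ} (J : Ideal (PolyS k n))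

theorem quotHom_zero (t : ℤ) : quotHom k n J t 0 :=
  ⟨0, polyHom_zero t, map_zero _⟩

theorem quotHom_add {t : ℤ} {a b : PolyS k n ⧸ J} (ha : quotHom k n J t a)
    (hb : quotHom k n J t b) : quotHom k n J t (a + b) := by
  obtain ⟨p, hp, rfl⟩ := ha
  obtain ⟨q, hq, rfl⟩ := hb
  exact ⟨p + q, polyHom_add hp hq, map_add _ _ _⟩

theorem quotHom_mul {t t' : ℤ} {a b : PolyS k n ⧸ J} (ha : quotHom k n J t a)
    (hb : quotHom k n J t' b) : quotHom k n J (t + t') (a * b) := by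
  obtain ⟨p, hp, rfl⟩ := ha
  obtain ⟨q, hq, rfl⟩ := hb
  exact ⟨p * q, polyHom_mul hp hq, map_mul _ _ _⟩

theorem quotHom_sum {ι : Type} {T : Finset ι} {t : ℤ} {a : ι → PolyS k n ⧸ J}
    (ha : ∀ s ∈ T, quotHom k n J t (a s)) : quotHom k n J t (∑ s ∈ T, a s) :=
  Finset.sum_induction a _ (fun _ _ => quotHom_add J) (quotHom_zero J t) ha

theorem mk_mem_mIdlQ_pow_iff {ℓ : ℕ} {p : PolyS k n} :
    Ideal.Quotient.mk J p ∈ mIdlQ k n J ^ ℓ ↔ p ∈ mIdl k n ^ ℓ ⊔ J := by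
  rw [mIdlQ, ← Ideal.map_pow, ← Ideal.mem_comap,
    Ideal.comap_map_of_surjective _ Ideal.Quotient.mk_surjective, ← RingHom.ker_eq_comap_bot,
    Ideal.mk_ker]

variable {J}

theorem quotHom_mem_mIdlQ_pow_of_sum_mem (hJ : IdealIsHomog J) {ι : Type} {T : Finset ι}
    {deg : ι → ℤ} (hdeg : Set.InjOn deg T) {a : ι → PolyS k n ⧸ J}
    (ha : ∀ s ∈ T, quotHom k n J (deg s) (a s)) {ℓ : ℕ}
    (hsum : ∑ s ∈ T, a s ∈ mIdlQ k n J ^ ℓ) : ∀ s ∈ T, a s ∈ mIdlQ k n J ^ ℓ := by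
  choose! p hp hpa using ha
  have hsum' : ∑ s ∈ T, p s ∈ mIdl k n ^ ℓ ⊔ J := by
    rwa [← mk_mem_mIdlQ_pow_iff, map_sum, Finset.sum_congr rfl hpa]
  intro s hs
  rw [← hpa s hs, mk_mem_mIdlQ_pow_iff]
  exact ((idealIsHomog_mIdl_pow ℓ).sup hJ).mem_of_sum_mem hdeg hp hsum' s hs

end Quotient

namespace MinFreeRes

section Graded

variable {k : Type} [Field k] {n : ℕ} {J : Ideal (PolyS k n)}
  {M : Type} [AddCommGroup M] [Module (PolyS k n ⧸ J) M] {gM : GrModStr (quotHom k n J) M}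
  {res : MinFreeRes (mIdlQ k n J) (quotHom k n J) M gM}

theorem IsHomogF.d {i : ℕ} {t : ℤ} {g : res.β (i+1) →₀ PolyS k n ⧸ J}
    (hg : res.IsHomogF (i+1) t g) : res.IsHomogF i t (res.d i g) := by
  intro c
  rw [d_apply]
  refine quotHom_sum J fun b _ => ?_
  simpa [ent] using quotHom_mul J (hg b) (res.homog i b c)

variable (res)

theorem exists_sum_isHomogF (i : ℕ) (g : res.β i →₀ PolyS k n ⧸ J) :
    ∃ (T : Finset ℤ) (comp : ℤ → res.β i →₀ PolyS k n ⧸ J),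
      (∀ s, res.IsHomogF i s (comp s)) ∧ ∑ s ∈ T, comp s = g := by
  classical
  have := res.finb i
  choose P hP using fun c => Ideal.Quotient.mk_surjective (I := J) (g c)
  refine ⟨Finset.univ.biUnion fun c => (Finset.range ((P c).totalDegree + 1)).image
      fun j : ℕ => (j : ℤ) + res.degB i c,
    fun s => Finsupp.equivFunOnFinite.symm fun c =>
      Ideal.Quotient.mk J (homogeneousComponentInt (s - res.degB i c) (P c)),
    fun s c => ⟨_, polyHom_homogeneousComponentInt _ _, rfl⟩, ?_⟩
  ext c
  rw [Finset.sum_apply']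
  simp only [Finsupp.equivFunOnFinite_symm_apply_apply]
  rw [← map_sum, sum_homogeneousComponentInt_sub, hP c]
  intro j hj
  exact Finset.mem_biUnion.2 ⟨c, Finset.mem_univ c,
    Finset.mem_image_of_mem _ (Finset.mem_range.2 (Nat.lt_succ_of_le hj))⟩

theorem mem_mF_of_sum_mem (hJ : IdealIsHomog J) {i ℓ : ℕ} {T : Finset ℤ}
    {comp : ℤ → res.β i →₀ PolyS k n ⧸ J} (hcomp : ∀ s, res.IsHomogF i s (comp s))
    (hsum : ∑ s ∈ T, comp s ∈ res.mF ℓ i) : ∀ s ∈ T, comp s ∈ res.mF ℓ i := by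
  intro s hs
  refine res.mem_mF_iff.2 fun c => ?_
  have hc : ∑ s ∈ T, comp s c ∈ mIdlQ k n J ^ ℓ := by
    simpa [Finset.sum_apply'] using res.mem_mF_iff.1 hsum c
  exact quotHom_mem_mIdlQ_pow_of_sum_mem hJ (deg := fun s => s - res.degB i c)
    (fun a _ b _ h => by simpa using h) (fun s _ => hcomp s c) hc s hs

end Graded

end MinFreeRes

/-- (Şega's lemma.)  `ν_i^1(M) = 0` if and only if every homogeneous
`g ∈ F_i` with `d g ∈ m² F_{i-1}` satisfies `g ∈ m F_i`.  (For `i = 0` one has `F_{-1} = 0`,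
so the condition `d g ∈ m² F_{-1}` is vacuous.) -/
theorem nu_eq_zero_iff {k : Type} [Field k] {n : ℕ}
    (J : Ideal (PolyS k n)) (hJ : IdealIsHomog J)
    {M : Type} [AddCommGroup M] [Module (PolyS k n ⧸ J) M]
    (gM : GrModStr (quotHom k n J) M)
    (res : MinFreeRes (mIdlQ k n J) (quotHom k n J) M gM) :
    (res.nu0 = 0 ↔
      ∀ (t : ℤ) (g : res.β 0 →₀ (PolyS k n ⧸ J)),
        res.IsHomogF 0 t g → g ∈ res.mF 1 0) ∧
    (∀ i : ℕ, res.nuS i = 0 ↔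
      ∀ (t : ℤ) (g : res.β (i+1) →₀ (PolyS k n ⧸ J)),
        res.IsHomogF (i+1) t g → res.d i g ∈ res.mF 2 i → g ∈ res.mF 1 (i+1)) := by
  refine ⟨?_, fun i => ?_⟩
  · rw [res.nu0_eq_zero_iff]
    refine ⟨fun h _ g _ => h g, fun h g => ?_⟩
    obtain ⟨T, comp, hcomp, rfl⟩ := res.exists_sum_isHomogF 0 g
    exact sum_mem fun s _ => h s (comp s) (hcomp s)
  · rw [res.nuS_eq_zero_iff]
    refine ⟨fun h _ g _ => h g, fun h g hg => ?_⟩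
    obtain ⟨T, comp, hcomp, rfl⟩ := res.exists_sum_isHomogF (i+1) g
    rw [map_sum] at hg
    have hdcomp := res.mem_mF_of_sum_mem hJ (fun s => (hcomp s).d) hg
    exact sum_mem fun s hs => h s (comp s) (hcomp s) (hdcomp s hs)

end LinMaps
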